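/- arXiv:1802.00281 — 5 statements merged into one kernel-verified Lean document; each statement's English description precedes it below -/
import Mathlib

section
/- Let r, c, x, d be positive integers with gcd(gcd(r,c), x) = 1 and c²·d = r·x. Set p = gcd(r, c). Then p² divides r, and writing r = p²·s and c = p·q, one has gcd(p, q) = 1, gcd(q, s) = 1, q² divides x, and writing x = q²·t one has s·t = d. -/
/-- Factorization of a primitive isotropic Mukai vector. -/
theorem primitive_isotropic_factorization (r c x d : ℕ)
    (hr : 0 < r) (hc : 0 < c) (hx : 0 < x) (hd : 0 < d)
    (hprim : Nat.gcd (Nat.gcd r c) x = 1) (hiso : c ^ 2 * d = r * x) :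
    (Nat.gcd r c) ^ 2 ∣ r ∧
    ∀ s q : ℕ, r = (Nat.gcd r c) ^ 2 * s → c = (Nat.gcd r c) * q →
      Nat.gcd (Nat.gcd r c) q = 1 ∧ Nat.gcd q s = 1 ∧ q ^ 2 ∣ x ∧
      ∀ t : ℕ, x = q ^ 2 * t → s * t = d := by
  set p := Nat.gcd r c with hp
  have hp0 : 0 < p := Nat.gcd_pos_of_pos_left _ hr
  have hpr : p ∣ r := Nat.gcd_dvd_left r c
  have hpc : p ∣ c := Nat.gcd_dvd_right r c
  have hpx : Nat.Coprime p x := hprim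
  obtain ⟨r0, hr0⟩ := hpr
  obtain ⟨q0, hq0⟩ := hpc
  have hcrq : Nat.Coprime r0 q0 := by
    have := Nat.coprime_div_gcd_div_gcd (m := r) (n := c) hp0
    rwa [← hp, hr0, hq0, Nat.mul_div_cancel_left _ hp0, Nat.mul_div_cancel_left _ hp0] at this
  -- p q0² d = r0 x
  have key : p * q0 ^ 2 * d = r0 * x := by
    have : p * (p * q0 ^ 2 * d) = p * (r0 * x) := by
      rw [hr0, hq0] at hiso; ring_nf at hiso ⊢; linarith
    exact Nat.eq_of_mul_eq_mul_left hp0 this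
  have hpr0 : p ∣ r0 := by
    have : p ∣ r0 * x := ⟨q0 ^ 2 * d, by linarith [key]⟩
    exact (Nat.Coprime.dvd_of_dvd_mul_right hpx this)
  have hsq : p ^ 2 ∣ r := by
    obtain ⟨s0, hs0⟩ := hpr0
    exact ⟨s0, by rw [hr0, hs0]; ring⟩
  refine ⟨hsq, ?_⟩
  intro s q hrs hcq
  have hq0q : q0 = q := by
    have : p * q0 = p * q := by rw [← hq0, hcq]
    exact Nat.eq_of_mul_eq_mul_left hp0 this
  have hr0ps : r0 = p * s := by
    have : p * r0 = p * (p * s) := by rw [← hr0, hrs]; ring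
    exact Nat.eq_of_mul_eq_mul_left hp0 this
  subst hq0q
  have hcps : Nat.Coprime (p * s) q0 := hr0ps ▸ hcrq
  have hpq : Nat.Coprime p q0 := Nat.Coprime.coprime_dvd_left ⟨s, rfl⟩ hcps
  have hsq0 : Nat.Coprime q0 s := (Nat.Coprime.coprime_dvd_left ⟨p, mul_comm p s⟩ hcps).symm
  -- q0² d = s x
  have key2 : q0 ^ 2 * d = s * x := by
    have : p * (q0 ^ 2 * d) = p * (s * x) := by rw [hr0ps] at key; ring_nf at key ⊢; linarith
    exact Nat.eq_of_mul_eq_mul_left hp0 this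
  have hq2x : q0 ^ 2 ∣ x := by
    have hco : Nat.Coprime (q0 ^ 2) s := Nat.Coprime.pow_left _ hsq0
    exact hco.dvd_of_dvd_mul_left ⟨d, by linarith [key2]⟩
  refine ⟨hpq, hsq0, hq2x, ?_⟩
  intro t ht
  have hq0pos : 0 < q0 := by
    rcases Nat.eq_zero_or_pos q0 with h | h
    · subst h; simp at hcq; omega
    · exact h
  have : q0 ^ 2 * d = q0 ^ 2 * (s * t) := by rw [key2, ht]; ring
  have := Nat.eq_of_mul_eq_mul_left (pow_pos hq0pos 2) this
  omega
end

section
/- For every positive integer n, there are no integers p, q with 5·n·p² − 13·q² = 1 or 5·n·p² − 13·q² = −1, and there are no integers p, q with 13·n·p² − 5·q² = 1 or 13·n·p² − 5·q² = −1. -/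
lemma aux5 : ∀ x : ZMod 5, 0 - 13 * x ^ 2 ≠ 1 ∧ 0 - 13 * x ^ 2 ≠ -1 := by decide

lemma aux13 : ∀ x : ZMod 13, 0 - 5 * x ^ 2 ≠ 1 ∧ 0 - 5 * x ^ 2 ≠ -1 := by decide

theorem pell_deg130_never_solvable (n : ℕ) (hn : 0 < n) :
    (¬ ∃ p q : ℤ, 5 * (n : ℤ) * p ^ 2 - 13 * q ^ 2 = 1 ∨ 5 * (n : ℤ) * p ^ 2 - 13 * q ^ 2 = -1) ∧
    (¬ ∃ p q : ℤ, 13 * (n : ℤ) * p ^ 2 - 5 * q ^ 2 = 1 ∨ 13 * (n : ℤ) * p ^ 2 - 5 * q ^ 2 = -1) := by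
  constructor
  · rintro ⟨p, q, h | h⟩ <;>
    · have h5 := congrArg (Int.cast : ℤ → ZMod 5) h
      push_cast at h5
      rw [show ((5 : ZMod 5)) = 0 by decide, zero_mul, zero_mul] at h5
      rcases aux5 (q : ZMod 5) with ⟨h1, h2⟩
      first | exact h1 h5 | exact h2 h5
  · rintro ⟨p, q, h | h⟩ <;>
    · have h13 := congrArg (Int.cast : ℤ → ZMod 13) h
      push_cast at h13
      rw [show ((13 : ZMod 13)) = 0 by decide, zero_mul, zero_mul] at h13
      rcases aux13 (q : ZMod 13) with ⟨h1, h2⟩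
      first | exact h1 h13 | exact h2 h13
end

section
/- Let d, n, s, t, p, q be integers with n ≥ 2, s, t ≥ 1, s·t = d, such that d·(n−1) is a perfect square and p²·s·(n−1) − q²·t = 1 or p²·s·(n−1) − q²·t = −1. Then either p = 0 and q² = t = 1, or q = 0 and p² = s = 1 and n = 2. -/
theorem pell_square_case (d n s t p q : ℤ) (hn : 2 ≤ n) (hs : 1 ≤ s) (ht : 1 ≤ t)
    (hst : s * t = d) (hsq : ∃ k : ℤ, d * (n - 1) = k ^ 2)
    (hpell : p ^ 2 * s * (n - 1) - q ^ 2 * t = 1 ∨ p ^ 2 * s * (n - 1) - q ^ 2 * t = -1) :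
    (p = 0 ∧ q ^ 2 = 1 ∧ t = 1) ∨ (q = 0 ∧ p ^ 2 = 1 ∧ s = 1 ∧ n = 2) := by
  obtain ⟨k, hk⟩ := hsq
  have hn1 : 1 ≤ n - 1 := by omega
  have hapos : 1 ≤ s * (n - 1) := one_le_mul_of_one_le_of_one_le hs hn1
  have hab : (s * (n - 1)) * t = k ^ 2 := by
    calc (s * (n - 1)) * t = (s * t) * (n - 1) := by ring
    _ = k ^ 2 := by rw [hst]; exact hk
  have hcop : IsCoprime (s * (n - 1)) t := by
    rcases hpell with h | h
    · exact ⟨p ^ 2, -q ^ 2, by linear_combination h⟩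
    · exact ⟨-p ^ 2, q ^ 2, by linear_combination -h⟩
  obtain ⟨u, hu⟩ := Int.sq_of_isCoprime hcop hab
  obtain ⟨v, hv⟩ := Int.sq_of_isCoprime hcop.symm (by rw [mul_comm]; exact hab)
  have hau : s * (n - 1) = u ^ 2 := by
    rcases hu with h | h
    · exact h
    · nlinarith [sq_nonneg u]
  have htv : t = v ^ 2 := by
    rcases hv with h | h
    · exact h
    · nlinarith [sq_nonneg v]
  have hvne : v ≠ 0 := by
    intro h; rw [h] at htv; simp at htv; omega
  have key : (p * u) ^ 2 - (q * v) ^ 2 = 1 ∨ (p * u) ^ 2 - (q * v) ^ 2 = -1 := by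
    rcases hpell with h | h
    · left; linear_combination h - p ^ 2 * hau + q ^ 2 * htv
    · right; linear_combination h - p ^ 2 * hau + q ^ 2 * htv
  rcases key with h | h
  · -- q*v = 0, (p*u)^2 = 1
    have hfac : (p * u - q * v) * (p * u + q * v) = 1 := by linear_combination h
    have h1 : (p * u - q * v = 1 ∧ p * u + q * v = 1) ∨
        (p * u - q * v = -1 ∧ p * u + q * v = -1) := by
      rcases Int.mul_eq_one_iff_eq_one_or_neg_one.mp hfac with ⟨h1, h2⟩ | ⟨h1, h2⟩
      · exact Or.inl ⟨h1, h2⟩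
      · exact Or.inr ⟨h1, h2⟩
    have hqv : q * v = 0 := by rcases h1 with ⟨h1, h2⟩ | ⟨h1, h2⟩ <;> omega
    have hq : q = 0 := by
      rcases mul_eq_zero.mp hqv with h' | h'
      · exact h'
      · exact absurd h' hvne
    have hpu : (p * u) ^ 2 = 1 := by rw [hqv] at h; linarith
    have hpa : p ^ 2 * (s * (n - 1)) = 1 := by rw [hau]; linear_combination hpu
    have hp21 : p ^ 2 = 1 := by nlinarith [sq_nonneg p]
    have hp2 : p ^ 2 = 1 ∧ s * (n - 1) = 1 := ⟨hp21, by rw [hp21] at hpa; linarith⟩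
    have hs1 : s = 1 ∧ n - 1 = 1 := by
      constructor <;> nlinarith [hp2.2]
    exact Or.inr ⟨hq, hp2.1, hs1.1, by omega⟩
  · -- p*u = 0, (q*v)^2 = 1
    have hfac : (q * v - p * u) * (q * v + p * u) = 1 := by linear_combination -h
    have h1 : (q * v - p * u = 1 ∧ q * v + p * u = 1) ∨
        (q * v - p * u = -1 ∧ q * v + p * u = -1) := by
      rcases Int.mul_eq_one_iff_eq_one_or_neg_one.mp hfac with ⟨h1, h2⟩ | ⟨h1, h2⟩
      · exact Or.inl ⟨h1, h2⟩
      · exact Or.inr ⟨h1, h2⟩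
    have hpu : p * u = 0 := by rcases h1 with ⟨h1, h2⟩ | ⟨h1, h2⟩ <;> omega
    have hqv : (q * v) ^ 2 = 1 := by rw [hpu] at h; linarith
    have hqt : q ^ 2 * t = 1 := by rw [htv]; linear_combination hqv
    have hq21 : q ^ 2 = 1 := by nlinarith [sq_nonneg q]
    have hq2 : q ^ 2 = 1 ∧ t = 1 := ⟨hq21, by rw [hq21] at hqt; linarith⟩
    have hp : p = 0 := by
      have hune : u ≠ 0 := by
        intro h'; rw [h'] at hau; simp at hau; omega
      rcases mul_eq_zero.mp hpu with h' | h'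
      · exact h'
      · exact absurd h' hune
    exact Or.inl ⟨hp, hq2.1, hq2.2⟩
end

section
/- Let d ≥ 1 and n ≥ 2 be integers, and let p, q, s, t be integers with s, t ≥ 1, s·t = d, gcd(p, q) = 1, and p²·s·(n−1) − q²·t = ε with ε ∈ {1, −1}. Then the vector w = (p²s, pq, q²t) ∈ ℤ³ is primitive (i.e., gcd of its entries is 1), isotropic for the pairing ⟨(r,c,x),(r',c',x')⟩ = 2d·c·c' − r·x' − x·r' (i.e., ⟨w,w⟩ = 0), and satisfies ⟨(1,0,1−n), w⟩ = −(q²t) + (n−1)p²s = ε. -/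
/-- The algebraic Mukai pairing on ℤ³ for a K3 surface with H² = 2d. -/
def mukaiPair (d : ℤ) (v w : ℤ × ℤ × ℤ) : ℤ :=
  2 * d * v.2.1 * w.2.1 - v.1 * w.2.2 - v.2.2 * w.1

theorem pell_solution_gives_mukai_vector (d n s t p q ε : ℤ)
    (hd : 1 ≤ d) (hn : 2 ≤ n) (hs : 1 ≤ s) (ht : 1 ≤ t) (hst : s * t = d)
    (hcop : Int.gcd p q = 1) (hε : ε = 1 ∨ ε = -1)
    (hpell : p ^ 2 * s * (n - 1) - q ^ 2 * t = ε) :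
    Int.gcd (p ^ 2 * s) (Int.gcd (p * q) (q ^ 2 * t)) = 1 ∧
    mukaiPair d (p ^ 2 * s, p * q, q ^ 2 * t) (p ^ 2 * s, p * q, q ^ 2 * t) = 0 ∧
    mukaiPair d (1, 0, 1 - n) (p ^ 2 * s, p * q, q ^ 2 * t) = ε := by
  have hε2 : ε * ε = 1 := by rcases hε with h | h <;> simp [h]
  refine ⟨?_, ?_, ?_⟩
  · -- primitivity
    have hco : IsCoprime ((p ^ 2 * s : ℤ)) (q ^ 2 * t) :=
      ⟨ε * (n - 1), -ε, by linear_combination ε * hpell + hε2⟩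
    set G : ℕ := Int.gcd (p ^ 2 * s) (Int.gcd (p * q) (q ^ 2 * t)) with hG
    have h1 : (G : ℤ) ∣ p ^ 2 * s := Int.gcd_dvd_left _ _
    have h2 : (G : ℤ) ∣ ((Int.gcd (p * q) (q ^ 2 * t) : ℤ)) := Int.gcd_dvd_right _ _
    have h3 : (G : ℤ) ∣ q ^ 2 * t := h2.trans (Int.gcd_dvd_right _ _)
    obtain ⟨a, b, hab⟩ := hco
    have h4 : (G : ℤ) ∣ 1 := hab ▸ dvd_add (Dvd.dvd.mul_left h1 a) (Dvd.dvd.mul_left h3 b)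
    have : G ∣ 1 := by exact_mod_cast h4
    exact Nat.dvd_one.mp this
  · simp only [mukaiPair, ← hst]; ring
  · simp only [mukaiPair]; linear_combination hpell
end

section
/- Let d ≥ 1 and n ≥ 2 be integers and equip ℤ³ with the pairing ⟨(r,c,x),(r',c',x')⟩ = 2d·c·c' − r·x' − x·r'. Suppose w = (r, c, x) ∈ ℤ³ has positive first entry r ≥ 1, is primitive (gcd(r,c,x) = 1), isotropic (⟨w,w⟩ = 0, i.e., c²·d = r·x), and satisfies ⟨(1,0,1−n), w⟩ = ±1 (i.e., (n−1)·r − x = ±1). Then there exist integers p, q, s, t with s, t ≥ 1, s·t = d, gcd(p,q) = 1, r = p²s, c = pq, x = q²t, and p²·s·(n−1) − q²·t = ±1. -/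
theorem mukai_vector_gives_pell_solution (d n r c x : ℤ)
    (hd : 1 ≤ d) (hn : 2 ≤ n) (hr : 1 ≤ r)
    (hprim : Int.gcd r (Int.gcd c x) = 1)
    (hiso : mukaiPair d (r, c, x) (r, c, x) = 0)
    (hpair : mukaiPair d (1, 0, 1 - n) (r, c, x) = 1 ∨
             mukaiPair d (1, 0, 1 - n) (r, c, x) = -1) :
    ∃ p q s t : ℤ, 1 ≤ s ∧ 1 ≤ t ∧ s * t = d ∧ Int.gcd p q = 1 ∧
      r = p ^ 2 * s ∧ c = p * q ∧ x = q ^ 2 * t ∧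
      (p ^ 2 * s * (n - 1) - q ^ 2 * t = 1 ∨ p ^ 2 * s * (n - 1) - q ^ 2 * t = -1) := by
  simp only [mukaiPair] at hiso hpair
  -- isotropy : d * c^2 = r * x
  have hiso' : d * c ^ 2 = r * x := by ring_nf; ring_nf at hiso; linarith
  -- pairing : (n-1) * r - x = ±1
  have hpair' : (n - 1) * r - x = 1 ∨ (n - 1) * r - x = -1 := by
    rcases hpair with h | h
    · left; linarith
    · right; linarith
  -- x ≥ 0
  have hx0 : 0 ≤ x := by
    rcases hpair' with h | h <;> nlinarith
  -- r and x are coprime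
  have hco : IsCoprime r x := by
    rcases hpair' with h | h
    · exact ⟨n - 1, -1, by linarith⟩
    · exact ⟨-(n - 1), 1, by linarith⟩
  -- d divides r * x
  have hdvd : d ∣ r * x := ⟨c ^ 2, hiso'.symm⟩
  obtain ⟨s₀, t₀, hs₀, ht₀, hst₀⟩ := exists_dvd_and_dvd_of_dvd_mul hdvd
  have hd0 : d ≠ 0 := by linarith
  have hs0ne : s₀ ≠ 0 := by rintro rfl; rw [zero_mul] at hst₀; exact hd0 hst₀
  have ht0ne : t₀ ≠ 0 := by rintro rfl; rw [mul_zero] at hst₀; exact hd0 hst₀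
  set s : ℤ := |s₀| with hs_def
  set t : ℤ := |t₀| with ht_def
  have hs_dvd : s ∣ r := (abs_dvd _ _).mpr hs₀
  have ht_dvd : t ∣ x := (abs_dvd _ _).mpr ht₀
  have hst : s * t = d := by
    rw [hs_def, ht_def, ← abs_mul, ← hst₀]; exact abs_of_pos (by linarith)
  have hs_pos : 0 < s := abs_pos.mpr hs0ne
  have ht_pos : 0 < t := abs_pos.mpr ht0ne
  obtain ⟨r', hr'⟩ := hs_dvd
  obtain ⟨x', hx'⟩ := ht_dvd
  -- r' * x' = c ^ 2
  have hkey : r' * x' = c ^ 2 := by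
    have : d * (r' * x') = d * c ^ 2 := by
      rw [hiso', hr', hx', ← hst]; ring
    exact mul_left_cancel₀ hd0 this
  have hco' : IsCoprime r' x' :=
    IsCoprime.of_isCoprime_of_dvd_left
      (IsCoprime.of_isCoprime_of_dvd_right hco ⟨t, by rw [hx']; ring⟩)
      ⟨s, by rw [hr']; ring⟩
  obtain ⟨p, hp⟩ := Int.sq_of_isCoprime hco' hkey
  obtain ⟨q, hq⟩ := Int.sq_of_isCoprime hco'.symm (by rw [mul_comm]; exact hkey)
  have hr'pos : 0 < r' := by
    rcases lt_trichotomy r' 0 with h | h | h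
    · nlinarith
    · rw [h, mul_zero] at hr'; omega
    · exact h
  have hx'nonneg : 0 ≤ x' := by
    rcases lt_trichotomy x' 0 with h | h | h
    · nlinarith
    · omega
    · omega
  have hp2 : r' = p ^ 2 := by
    rcases hp with h | h
    · exact h
    · nlinarith [sq_nonneg p]
  have hq2 : x' = q ^ 2 := by
    rcases hq with h | h
    · exact h
    · nlinarith [sq_nonneg q]
  -- c = ± p * q
  have hcsq : c ^ 2 = (p * q) ^ 2 := by rw [← hkey, hp2, hq2]; ring
  have hc : c = p * q ∨ c = -(p * q) := sq_eq_sq_iff_eq_or_eq_neg.mp hcsq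
  -- coprimality of p and q
  have hpq : IsCoprime p q := by
    rw [hp2, hq2] at hco'
    exact IsCoprime.of_isCoprime_of_dvd_left
      (IsCoprime.of_isCoprime_of_dvd_right hco' (dvd_pow_self q two_ne_zero))
      (dvd_pow_self p two_ne_zero)
  have hreq : r = p ^ 2 * s := by rw [hr', hp2]; ring
  have hxeq : x = q ^ 2 * t := by rw [hx', hq2]; ring
  have hpell : p ^ 2 * s * (n - 1) - q ^ 2 * t = 1 ∨
      p ^ 2 * s * (n - 1) - q ^ 2 * t = -1 := by
    rcases hpair' with h | h
    · left; rw [← hreq, ← hxeq]; linarith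
    · right; rw [← hreq, ← hxeq]; linarith
  rcases hc with h | h
  · exact ⟨p, q, s, t, hs_pos, ht_pos, hst, Int.isCoprime_iff_gcd_eq_one.mp hpq,
      hreq, h, hxeq, hpell⟩
  · refine ⟨p, -q, s, t, hs_pos, ht_pos, hst, ?_, hreq, by rw [h]; ring,
      by rw [hxeq]; ring, by simpa using hpell⟩
    rw [Int.isCoprime_iff_gcd_eq_one.mp hpq.neg_right]
end
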